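/- arXiv:1605.00490 — 4 statements merged into one kernel-verified Lean document; each statement's English description precedes it below -/
import Mathlib

section
/- Let T be a compactly generated triangulated category with small coproducts and let L be a localizing subcategory of T whose inclusion functor ι : L → T admits a right adjoint ι^R. Assume that (i) an object of L is compact in L if and only if its image under ι is compact in T (i.e. L^c = L ∩ T^c), and (ii) the family of all compact objects of L satisfies (G1) in L. Then ι^R commutes with small coproducts; that is, L is a smashing subcategory of T. -/
open CategoryTheory CategoryTheory.Limits CategoryTheory.Pretriangulated DirectSum

universe v u u'

namespace Paper1

/-- An object `C` of a category with small coproducts is *compact* if for every small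
family `{Xᵢ}` the canonical map `⊕ᵢ Hom(C, Xᵢ) → Hom(C, ∐ᵢ Xᵢ)` is bijective. -/
def IsCompactObj {T : Type u} [Category.{v} T] [Preadditive T] [HasCoproducts.{v} T]
    (C : T) : Prop :=
  ∀ (ι : Type v) (X : ι → T),
    letI := Classical.decEq ι
    Function.Bijective
      (⇑(DirectSum.toAddMonoid (fun i => Preadditive.rightComp C (Sigma.ι X i)) :
        (⨁ i, (C ⟶ X i)) →+ (C ⟶ ∐ X)))

/-- A family `S` of objects satisfies condition (G1) if every object `X` such that
`Hom(S i, X⟦j⟧) = 0` for all `i` and all `j : ℤ` is a zero object. -/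
def SatisfiesG1 {T : Type u} [Category.{v} T] [Preadditive T] [HasShift T ℤ]
    {κ : Type*} (S : κ → T) : Prop :=
  ∀ X : T, (∀ (i : κ) (j : ℤ) (f : S i ⟶ (X⟦j⟧)), f = 0) → IsZero X

/-! For a compact object `C` of `L`, the object `ι C` is compact in `T`, so the adjunction gives
`Hom(C, ∐ ιR Xⱼ) ≅ ⊕ Hom(C, ιR Xⱼ) ≅ ⊕ Hom(ι C, Xⱼ) ≅ Hom(ι C, ∐ Xⱼ) ≅ Hom(C, ιR (∐ Xⱼ))`,
and this composite is post-composition with the comparison map `c : ∐ ιR Xⱼ ⟶ ιR (∐ Xⱼ)`.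
Compact objects are stable under shifts, so the long exact `Hom`-sequence of a distinguished
triangle on `c` shows that its cone receives no nonzero map from a shifted compact object.
By (G1) in `L` the cone is zero, hence `c` is an isomorphism. -/

section Compact

variable {C : Type u} [Category.{v} C] [Preadditive C] [HasCoproducts.{v} C]

/-- The classical decidability instance matches `IsCompactObj`, which therefore says exactly
that this map is bijective for every small family `X`. -/
noncomputable def directSumHomToSigma {J : Type v} (P : C) (X : J → C) :
    (⨁ j, (P ⟶ X j)) →+ (P ⟶ ∐ X) :=
  letI := Classical.decEq J
  DirectSum.toAddMonoid fun j => Preadditive.rightComp P (Sigma.ι X j)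

theorem directSumHomToSigma_of {J : Type v} [DecidableEq J] (P : C) (X : J → C) (j : J)
    (f : P ⟶ X j) :
    directSumHomToSigma P X (DirectSum.of (fun j => P ⟶ X j) j f) = f ≫ Sigma.ι X j := by
  rw [directSumHomToSigma, Subsingleton.elim (Classical.decEq J) ‹_›]
  exact DirectSum.toAddMonoid_of (fun j => Preadditive.rightComp P (Sigma.ι X j)) j f

end Compact

end Paper1

namespace CategoryTheory.Adjunction

open Paper1

variable {C : Type u} {D : Type u'} [Category.{v} C] [Category.{v} D] [Preadditive C]
  [Preadditive D] [HasCoproducts.{v} C] [HasCoproducts.{v} D] {F : C ⥤ D} {G : D ⥤ C}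

theorem homAddEquiv_comp_directSumHomToSigma (adj : F ⊣ G) [F.Additive] {J : Type v} (P : C)
    (X : J → D) :
    (adj.homAddEquiv P (∐ X)).toAddMonoidHom.comp (directSumHomToSigma (F.obj P) X) =
      ((Preadditive.rightComp P (sigmaComparison G X)).comp
        (directSumHomToSigma P (fun j => G.obj (X j)))).comp
        (DirectSum.congrAddEquiv (fun j => adj.homAddEquiv P (X j))).toAddMonoidHom := by
  classical
  refine DirectSum.addHom_ext fun j f => ?_
  simp [directSumHomToSigma_of, DirectSum.congrAddEquiv, homEquiv_naturality_right,
    Preadditive.rightComp]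

theorem bijective_comp_sigmaComparison_iff (adj : F ⊣ G) [F.Additive] {J : Type v} {P : C}
    (hP : IsCompactObj P) (X : J → D) :
    Function.Bijective (fun g : P ⟶ ∐ (fun j => G.obj (X j)) => g ≫ sigmaComparison G X) ↔
      Function.Bijective (directSumHomToSigma (F.obj P) X) := by
  have square := congrArg DFunLike.coe (adj.homAddEquiv_comp_directSumHomToSigma P X)
  simp only [AddMonoidHom.coe_comp, AddEquiv.coe_toAddMonoidHom] at square
  have hΦ : Function.Bijective (directSumHomToSigma P (fun j => G.obj (X j)) ∘
      DirectSum.congrAddEquiv (fun j => adj.homAddEquiv P (X j))) :=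
    (hP J _).comp (DirectSum.congrAddEquiv _).bijective
  rw [← Function.Bijective.of_comp_iff' (adj.homAddEquiv P (∐ X)).bijective, square,
    Function.comp_assoc, Function.Bijective.of_comp_iff _ hΦ]
  rfl

theorem isCompactObj_obj (adj : F ⊣ G) [F.Additive] [PreservesColimitsOfSize.{v, v} G] {P : C}
    (hP : IsCompactObj P) : IsCompactObj (F.obj P) := fun _ X =>
  (adj.bijective_comp_sigmaComparison_iff hP X).1
    ((isIso_iff_yoneda_map_bijective _).1 inferInstance P)

end CategoryTheory.Adjunction

namespace Paper1

noncomputable def shiftAdjunction (C : Type u) [Category.{v} C] [HasShift C ℤ] (n : ℤ) :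
    shiftFunctor C (-n) ⊣ shiftFunctor C n :=
  (shiftEquiv C n).symm.toAdjunction

theorem IsCompactObj.shift {C : Type u} [Category.{v} C] [Preadditive C] [HasCoproducts.{v} C]
    [HasShift C ℤ] [∀ n : ℤ, (shiftFunctor C n).Additive] {P : C} (hP : IsCompactObj P)
    (n : ℤ) : IsCompactObj (P⟦n⟧) := by
  simpa using (shiftAdjunction C (-n)).isCompactObj_obj hP

section Pretriangulated

variable {L : Type u} [Category.{v} L] [HasZeroObject L] [HasShift L ℤ] [Preadditive L]
  [∀ n : ℤ, (shiftFunctor L n).Additive] [Pretriangulated L]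

theorem hom_obj₃_eq_zero_of_surjective_of_injective {T : Triangle L} (hT : T ∈ distTriang L)
    {C : L} (hsurj : Function.Surjective (fun g : C ⟶ T.obj₁ => g ≫ T.mor₁))
    (hinj : Function.Injective (fun g : C ⟶ T.obj₁⟦(1 : ℤ)⟧ => g ≫ T.mor₁⟦(1 : ℤ)⟧'))
    (f : C ⟶ T.obj₃) : f = 0 := by
  have hf₃ : f ≫ T.mor₃ = 0 := hinj (by simp [comp_distTriang_mor_zero₃₁ T hT])
  obtain ⟨w, rfl⟩ := Triangle.coyoneda_exact₃ T hT f hf₃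
  obtain ⟨u, rfl⟩ := hsurj w
  simp [comp_distTriang_mor_zero₁₂ T hT]

theorem isIso_of_isColocal {P : ObjectProperty L} (hP : ∀ C, P C → ∀ n : ℤ, P (C⟦n⟧))
    (hG1 : ∀ X : L, (∀ C, P C → ∀ (j : ℤ) (f : C ⟶ X⟦j⟧), f = 0) → IsZero X)
    {A B : L} {c : A ⟶ B} (hc : P.isColocal c) : IsIso c := by
  obtain ⟨Z, g, h, hT⟩ := distinguished_cocone_triangle c
  refine (Triangle.isZero₃_iff_isIso₁ _ hT).1 (hG1 Z fun C hC j f => ?_)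
  -- `f : C ⟶ Z⟦j⟧` corresponds to a map `C⟦-j⟧ ⟶ Z`, and `P` holds for `C⟦-j⟧` and `C⟦-j⟧⟦-1⟧`
  have hinj := ((shiftAdjunction L 1).comp_map_bijective_iff c _).2
    (hc _ (hP _ (hP C hC (-j)) (-1)))
  have hf' : ((shiftAdjunction L j).homEquiv C Z).symm f = 0 :=
    hom_obj₃_eq_zero_of_surjective_of_injective hT (hc _ (hP C hC (-j))).2 hinj.1 _
  rw [← ((shiftAdjunction L j).homEquiv C Z).apply_symm_apply f, hf',
    Adjunction.homAddEquiv_zero]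

end Pretriangulated

/-- Let `T` be a compactly generated triangulated category with small coproducts and let
`L` be a localizing subcategory (modelled as a fully faithful exact functor `ι : L ⥤ T`
preserving small coproducts) whose inclusion admits a right adjoint `ιR`. If the compact
objects of `L` are exactly the objects of `L` which are compact in `T`, and the family of
all compact objects of `L` satisfies (G1) in `L`, then `ιR` commutes with small coproducts,
i.e. `L` is a smashing subcategory of `T`. -/
theorem statement1 {L : Type u} {T : Type u'} [Category.{v} L] [Category.{v} T]
    [HasZeroObject L] [HasShift L ℤ] [Preadditive L]
    [∀ n : ℤ, (shiftFunctor L n).Additive] [Pretriangulated L]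
    [HasZeroObject T] [HasShift T ℤ] [Preadditive T]
    [∀ n : ℤ, (shiftFunctor T n).Additive] [Pretriangulated T]
    [HasCoproducts.{v} L] [HasCoproducts.{v} T]
    -- `T` is compactly generated
    (κ : Type v) (G : κ → T) (hcompact : ∀ s, IsCompactObj (G s)) (hG1 : SatisfiesG1 G)
    -- the inclusion of the localizing subcategory `L`
    (ι : L ⥤ T) [ι.Full] [ι.Faithful] [ι.CommShift ℤ] [ι.IsTriangulated]
    (hloc : ∀ (J : Type v) (X : J → L),
      IsIso (Sigma.desc (fun j => ι.map (Sigma.ι X j)) :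
        (∐ fun j => ι.obj (X j)) ⟶ ι.obj (∐ X)))
    (ιR : T ⥤ L) (adj : ι ⊣ ιR)
    -- (i) `L^c = L ∩ T^c`
    (hc : ∀ X : L, IsCompactObj X ↔ IsCompactObj (ι.obj X))
    -- (ii) the compact objects of `L` satisfy (G1) in `L`
    (hLG1 : ∀ X : L, (∀ (C : L), IsCompactObj C → ∀ (j : ℤ) (f : C ⟶ (X⟦j⟧)), f = 0) →
      IsZero X) :
    ∀ (J : Type v) (X : J → T),
      IsIso (Sigma.desc (fun j => ιR.map (Sigma.ι X j)) :
        (∐ fun j => ιR.obj (X j)) ⟶ ιR.obj (∐ X)) := by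
  intro J X
  have hcolocal : ObjectProperty.isColocal (IsCompactObj (T := L)) (sigmaComparison ιR X) :=
    fun C hC => (adj.bijective_comp_sigmaComparison_iff hC X).2 ((hc C).1 hC J X)
  exact isIso_of_isColocal (fun C hC n => hC.shift n) hLG1 hcolocal

end Paper1
end

section
/- Let A be an additive category with binary biproducts and let X be a cochain complex over A indexed by ℤ. Let X'' denote the mapping cone of the chain map 2·id_X : X → X. Then the chain map 2·id_{X''} : X'' → X'' is null-homotopic; equivalently, 2·id_{X''} = 0 in the homotopy category K(A) of cochain complexes over A. -/
open CategoryTheory CategoryTheory.Limits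

universe v u

namespace Paper6

open CochainComplex CochainComplex.HomComplex in
lemma statement6_aux {A : Type u} [Category.{v} A] [Preadditive A] [HasZeroObject A]
    [HasBinaryBiproducts A] (X : CochainComplex A ℤ) :
    Nonempty (Homotopy ((2 : ℤ) • 𝟙 (CochainComplex.mappingCone ((2 : ℤ) • 𝟙 X)))
        (0 : CochainComplex.mappingCone ((2 : ℤ) • 𝟙 X) ⟶
          CochainComplex.mappingCone ((2 : ℤ) • 𝟙 X))) := by
  set φ : X ⟶ X := (2 : ℤ) • 𝟙 X with hφ
  refine ⟨(Cochain.equivHomotopy _ _).symm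
    ⟨(mappingCone.snd φ).comp (mappingCone.inl φ) (zero_add (-1)), ?_⟩⟩
  rw [Cochain.ofHom_zero, add_zero]
  rw [δ_comp _ _ (zero_add (-1)) 1 0 0 (by omega) (by omega) (by omega)]
  rw [mappingCone.δ_inl, mappingCone.δ_snd]
  have hid := mappingCone.id φ
  have h1 : Cochain.ofHom (φ ≫ mappingCone.inr φ) =
      (2 : ℤ) • Cochain.ofHom (mappingCone.inr φ) := by
    rw [hφ]; ext p; simp
  have h2 : Cochain.ofHom φ = (2 : ℤ) • Cochain.ofHom (𝟙 X) := by
    rw [hφ]; ext p; simp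
  simp only [h1, h2, Cochain.comp_smul, Cochain.smul_comp, Cochain.neg_comp, smul_neg,
    Int.negOnePow_neg, Int.negOnePow_one, Units.neg_smul, one_smul, neg_neg, Cochain.comp_id]
  rw [← smul_add, add_comm ((mappingCone.snd φ).comp (Cochain.ofHom (mappingCone.inr φ))
      (add_zero 0)), hid]
  ext p
  simp

/-- Let `A` be an additive category with binary biproducts and let `X` be a cochain complex
over `A`. Then `2 • 𝟙` on the mapping cone of `2 • 𝟙 X : X ⟶ X` is null-homotopic;
equivalently, `2 • 𝟙` of the mapping cone is zero in the homotopy category `K(A)`. -/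
theorem statement6 {A : Type u} [Category.{v} A] [Preadditive A] [HasZeroObject A]
    [HasBinaryBiproducts A] (X : CochainComplex A ℤ) :
    Nonempty
      (Homotopy ((2 : ℤ) • 𝟙 (CochainComplex.mappingCone ((2 : ℤ) • 𝟙 X)))
        (0 : CochainComplex.mappingCone ((2 : ℤ) • 𝟙 X) ⟶
          CochainComplex.mappingCone ((2 : ℤ) • 𝟙 X))) ∧
    (HomotopyCategory.quotient A (ComplexShape.up ℤ)).map
        ((2 : ℤ) • 𝟙 (CochainComplex.mappingCone ((2 : ℤ) • 𝟙 X))) = 0 := by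
  obtain ⟨h⟩ := statement6_aux X
  refine ⟨⟨h⟩, ?_⟩
  rw [HomotopyCategory.eq_of_homotopy _ _ h, Functor.map_zero]

end Paper6
end

section
/- Let A be an additive category with binary biproducts, let T be a triangulated category, and let F : T → K(A) be an exact (i.e. triangulated, commuting with shifts) fully faithful functor into the homotopy category of cochain complexes over A. Suppose S → S → S' → S[1] is a distinguished triangle in T whose first morphism is 2·id_S. Then 2·id_{S'} = 0 in T. -/
/-!
The cone `C` of `n • 𝟙 X` in `K(A)` is killed by `n`: the map `C ⟶ C` of degree `-1` that
projects onto the unshifted copy of `X` and includes it back into the shifted one is a null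
homotopy of `n • 𝟙 C`. Every distinguished triangle on `n • 𝟙 K` in `K(A)` has third vertex
isomorphic to such a cone, so it is killed by `n` as well. An exact functor `F` carries the
given triangle to one of these, whence `F.map (2 • 𝟙 S') = 0`, and faithfulness concludes.
-/

open CategoryTheory CategoryTheory.Limits CategoryTheory.Pretriangulated

universe v v' u u'

namespace Paper7

section

variable {A : Type u} [Category.{v} A] [Preadditive A] [HasBinaryBiproducts A]

open CochainComplex HomComplex mappingCone in
noncomputable def mappingConeZsmulIdHomotopy (n : ℤ) (X : CochainComplex A ℤ) :
    Homotopy (n • 𝟙 (mappingCone (n • 𝟙 X))) 0 := by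
  refine (Cochain.equivHomotopy _ _).symm
    ⟨(snd (n • 𝟙 X)).comp (inl (n • 𝟙 X)) (zero_add (-1)), ?_⟩
  rw [δ_zero_cochain_comp _ _ _ (neg_add_cancel 1), δ_inl, δ_snd]
  ext p
  simp only [Cochain.ofHom_v, HomologicalComplex.smul_f_apply, HomologicalComplex.id_f,
    Linear.smul_comp, Category.id_comp, Int.reduceNeg, Int.negOnePow_neg, Int.negOnePow_one,
    Cochain.neg_comp, Cochain.comp_assoc_of_second_is_zero_cochain, smul_neg, Units.neg_smul,
    one_smul, neg_neg, Cochain.ofHom_zero, add_zero, Cochain.add_v,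
    Cochain.comp_zero_cochain_v, Linear.comp_smul, Cochain.zero_cochain_comp_v,
    Cochain.comp_v _ _ (add_neg_cancel 1) p (p + 1) p rfl (by omega)]
  rw [← smul_add, add_comm, id_X (n • 𝟙 X) p (p + 1) rfl]

lemma zsmul_id_mappingCone_zsmul_id_eq_zero (n : ℤ) (X : CochainComplex A ℤ) :
    n • 𝟙 ((HomotopyCategory.quotient A (ComplexShape.up ℤ)).obj
      (CochainComplex.mappingCone (n • 𝟙 X))) = 0 := by
  simpa using HomotopyCategory.eq_of_homotopy _ _ (mappingConeZsmulIdHomotopy n X)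

variable [HasZeroObject A]

lemma zsmul_id_eq_zero_of_distTriang_zsmul_id (n : ℤ)
    {K L : HomotopyCategory A (ComplexShape.up ℤ)} (g : K ⟶ L) (h : L ⟶ K⟦(1 : ℤ)⟧)
    (hT : Triangle.mk (n • 𝟙 K) g h ∈ distTriang _) :
    n • 𝟙 L = 0 := by
  have hCone := HomotopyCategory.mappingCone_triangleh_distinguished (n • 𝟙 K.as)
  have e : L ≅ (HomotopyCategory.quotient A (ComplexShape.up ℤ)).obj
      (CochainComplex.mappingCone (n • 𝟙 K.as)) :=
    Triangle.π₃.mapIso (isoTriangleOfIso₁₂ _ _ hT hCone (Iso.refl _) (Iso.refl _) (by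
      change (n • 𝟙 K) ≫ 𝟙 K = 𝟙 K ≫ (HomotopyCategory.quotient _ _).map (n • 𝟙 K.as)
      rw [Functor.map_zsmul, CategoryTheory.Functor.map_id, Category.comp_id]
      exact (Category.id_comp _).symm))
  calc n • 𝟙 L = e.hom ≫ (n • 𝟙 _) ≫ e.inv := by simp
    _ = 0 := by simp [zsmul_id_mappingCone_zsmul_id_eq_zero]

end

/-- Let `A` be an additive category with binary biproducts, `T` a triangulated category and
`F : T ⥤ K(A)` an exact fully faithful functor into the homotopy category of cochain
complexes over `A`. If `S ⟶ S ⟶ S' ⟶ S⟦1⟧` is a distinguished triangle in `T` whose first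
morphism is `2 • 𝟙 S`, then `2 • 𝟙 S' = 0`. -/
theorem statement7 {A : Type u} [Category.{v} A] [Preadditive A] [HasZeroObject A]
    [HasBinaryBiproducts A]
    {T : Type u'} [Category.{v'} T] [HasZeroObject T] [HasShift T ℤ] [Preadditive T]
    [∀ n : ℤ, (shiftFunctor T n).Additive] [Pretriangulated T]
    (F : T ⥤ HomotopyCategory A (ComplexShape.up ℤ))
    [F.CommShift ℤ] [F.IsTriangulated] [F.Full] [F.Faithful]
    (S S' : T) (g : S ⟶ S') (h : S' ⟶ (S⟦(1 : ℤ)⟧))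
    (hT : Triangle.mk ((2 : ℤ) • 𝟙 S) g h ∈ distTriang T) :
    (2 : ℤ) • 𝟙 S' = 0 := by
  have hFT : Triangle.mk ((2 : ℤ) • 𝟙 (F.obj S)) (F.map g)
      (F.map h ≫ (F.commShiftIso (1 : ℤ)).hom.app S) ∈ distTriang _ := by
    rw [← F.map_id, ← F.map_zsmul]
    exact F.map_distinguished _ hT
  apply F.map_injective
  simpa using zsmul_id_eq_zero_of_distTriang_zsmul_id 2 _ _ hFT

end Paper7
end

section
/- Let p be a prime number and let R = ℤ/p²ℤ. Let C be the ℤ-indexed cochain complex of R-modules with C^n = R for every n ∈ ℤ and with every differential C^n → C^{n+1} given by multiplication by p. Then the endomorphism ring of C in the homotopy category K(Mod R) is a one-dimensional vector space over 𝔽_p = ℤ/pℤ; more precisely, there is a ring isomorphism End_{K(Mod R)}(C) ≅ 𝔽_p. -/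
/-!
A chain endomorphism `f` of `C` is multiplication by scalars `aₙ` with `p aₙ = p aₙ₊₁`;
since the annihilator of `p` in `ℤ/p²ℤ` is `(p)`, the class of `aₙ` modulo `p` does not
depend on `n`. A homotopy `s` changes `aₙ` by `p (sₙ + sₙ₊₁)`, so `f ↦ a₀ mod p` is a
surjective ring map `End(C) → ℤ/pℤ` killing null-homotopic maps. Conversely, if `p ∣ a₀` then
every `aₙ = p bₙ`, and solving `sₙ + sₙ₊₁ = bₙ` recursively in both directions gives a
null-homotopy of `f`. The argument works for any `r` with `r² = 0` and `Ann(r) = (r)`,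
giving `End(C) ≅ R/(r)`.
-/

open CategoryTheory CategoryTheory.Limits

namespace Paper8

/-- The cochain complex of `R`-modules which is `R` in every degree and whose differentials
are all given by multiplication by a fixed element `r` with `r * r = 0`. -/
noncomputable def Cx (R : Type) [CommRing R] (r : R) (h : r * r = 0) :
    CochainComplex (ModuleCat R) ℤ :=
  CochainComplex.of (fun _ => ModuleCat.of R R)
    (fun _ => ModuleCat.ofHom (r • LinearMap.id))
    (fun _ => by
      apply ModuleCat.hom_ext
      apply LinearMap.ext
      intro x
      show r • (r • x) = 0
      rw [smul_smul, h, zero_smul])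

/-- Multiplication by `p` squares to zero on `ℤ/p²ℤ`. -/
lemma p_mul_p (p : ℕ) : (p : ZMod (p ^ 2)) * (p : ZMod (p ^ 2)) = 0 := by
  rw [← Nat.cast_mul, ← pow_two, ZMod.natCast_self]

end Paper8

namespace CategoryTheory.Functor

variable {C D : Type*} [Category C] [Category D] [Preadditive C] [Preadditive D]
  (F : C ⥤ D) [F.Additive] (X : C)

def mapEndRingHom : End X →+* End (F.obj X) :=
  { F.mapEnd X with
    map_zero' := F.map_zero X X
    map_add' := fun _ _ => F.map_add }

theorem mapEndRingHom_surjective [F.Full] : Function.Surjective (F.mapEndRingHom X) :=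
  F.map_surjective

end CategoryTheory.Functor

namespace ZMod

theorem ker_castHom {m n : ℕ} (hmn : m ∣ n) :
    RingHom.ker (castHom hmn (ZMod m)) = Ideal.span {(m : ZMod n)} := by
  have hcomp : (castHom hmn (ZMod m)).comp (Int.castRingHom (ZMod n)) =
      Int.castRingHom (ZMod m) :=
    RingHom.ext_int _ _
  rw [← Ideal.map_comap_of_surjective (Int.castRingHom (ZMod n)) intCast_surjective
      (RingHom.ker _), RingHom.comap_ker, hcomp, ker_intCastRingHom, Ideal.map_span,
    Set.image_singleton, map_natCast]

noncomputable def quotientSpanNatCastEquiv {m n : ℕ} (hmn : m ∣ n) :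
    ZMod n ⧸ Ideal.span {(m : ZMod n)} ≃+* ZMod m :=
  (Ideal.quotEquivOfEq (ker_castHom hmn)).symm.trans
    (RingHom.quotientKerEquivOfSurjective (castHom_surjective hmn))

theorem natCast_dvd_of_natCast_mul_eq_zero {p : ℕ} (hp : p ≠ 0) {x : ZMod (p ^ 2)}
    (hx : (p : ZMod (p ^ 2)) * x = 0) : (p : ZMod (p ^ 2)) ∣ x := by
  obtain ⟨k, rfl⟩ := intCast_surjective x
  rw [← Int.cast_natCast, ← Int.cast_mul, intCast_zmod_eq_zero_iff_dvd, Nat.cast_pow, pow_two,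
    mul_dvd_mul_iff_left (by exact_mod_cast hp)] at hx
  simpa using map_dvd (Int.castRingHom (ZMod (p ^ 2))) hx

end ZMod

namespace Paper8

def alternatingPrimitive {A : Type*} [AddCommGroup A] (b : ℤ → A) (n : ℤ) : A :=
  if 0 < n then b (n - 1) - alternatingPrimitive b (n - 1)
  else if n < 0 then b n - alternatingPrimitive b (n + 1) else 0
termination_by n.natAbs
decreasing_by all_goals omega

theorem alternatingPrimitive_add_succ {A : Type*} [AddCommGroup A] (b : ℤ → A) (n : ℤ) :
    alternatingPrimitive b n + alternatingPrimitive b (n + 1) = b n := by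
  rcases lt_or_ge n 0 with hn | hn
  · rw [alternatingPrimitive, if_neg hn.not_gt, if_pos hn, sub_add_cancel]
  · rw [alternatingPrimitive.eq_def b (n + 1), if_pos (by omega), add_sub_cancel_right,
      add_sub_cancel]

namespace Cx

variable {R : Type} [CommRing R] {r : R} {h : r * r = 0} {i j k : ℤ}

noncomputable def coeff (φ : (Cx R r h).X i ⟶ (Cx R r h).X j) : R := φ.hom (1 : R)

theorem hom_ext_coeff {φ ψ : (Cx R r h).X i ⟶ (Cx R r h).X j} (hφψ : coeff φ = coeff ψ) :
    φ = ψ :=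
  ModuleCat.hom_ext (LinearMap.ext_ring hφψ)

theorem coeff_comp (φ : (Cx R r h).X i ⟶ (Cx R r h).X j)
    (ψ : (Cx R r h).X j ⟶ (Cx R r h).X k) : coeff (φ ≫ ψ) = coeff φ * coeff ψ := by
  have : ψ.hom (coeff φ • (1 : R)) = coeff φ • ψ.hom (1 : R) := ψ.hom.map_smul _ _
  rwa [smul_eq_mul, mul_one] at this

theorem coeff_add (φ ψ : (Cx R r h).X i ⟶ (Cx R r h).X j) :
    coeff (φ + ψ) = coeff φ + coeff ψ := rfl

theorem coeff_zero : coeff (0 : (Cx R r h).X i ⟶ (Cx R r h).X j) = 0 := rfl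

theorem coeff_ofHom (a : R) :
    coeff (h := h) (i := i) (j := j) (ModuleCat.ofHom (a • LinearMap.id)) = a :=
  mul_one a

theorem coeff_d (hij : i + 1 = j) : coeff ((Cx R r h).d i j) = r := by
  subst hij
  simp only [coeff, Cx, CochainComplex.of_d]
  exact mul_one r

variable (R r h) in
noncomputable def coeffHom (n : ℤ) : End (Cx R r h) →+* R where
  toFun f := coeff (f.f n)
  map_one' := rfl
  map_mul' f g := (coeff_comp (g.f n) (f.f n)).trans (mul_comm _ _)
  map_zero' := rfl
  map_add' _ _ := rfl

theorem coeffHom_apply (n : ℤ) (f : End (Cx R r h)) : coeffHom R r h n f = coeff (f.f n) := rfl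

theorem coeffHom_smul_id (n : ℤ) (a : R) : coeffHom R r h n (a • 𝟙 (Cx R r h)) = a :=
  mul_one a

theorem r_mul_coeffHom_succ (f : End (Cx R r h)) (n : ℤ) :
    r * coeffHom R r h (n + 1) f = r * coeffHom R r h n f := by
  have := congrArg coeff (f.comm n (n + 1))
  rw [coeff_comp, coeff_comp, coeff_d rfl, mul_comm, eq_comm] at this
  rwa [coeffHom_apply, coeffHom_apply]

theorem mk_coeffHom_succ (hr : ∀ x, r * x = 0 → r ∣ x) (f : End (Cx R r h)) (n : ℤ) :
    Ideal.Quotient.mk (Ideal.span {r}) (coeffHom R r h (n + 1) f) =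
      Ideal.Quotient.mk (Ideal.span {r}) (coeffHom R r h n f) := by
  rw [Ideal.Quotient.eq, Ideal.mem_span_singleton]
  exact hr _ (by rw [mul_sub, r_mul_coeffHom_succ, sub_self])

theorem mk_coeffHom_eq_mk_coeffHom_zero (hr : ∀ x, r * x = 0 → r ∣ x) (f : End (Cx R r h))
    (n : ℤ) : Ideal.Quotient.mk (Ideal.span {r}) (coeffHom R r h n f) =
      Ideal.Quotient.mk (Ideal.span {r}) (coeffHom R r h 0 f) := by
  induction n using Int.induction_on with
  | zero => rfl
  | succ k ih => rw [mk_coeffHom_succ hr, ih]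
  | pred k ih => rw [← ih, ← mk_coeffHom_succ hr f (-k - 1), sub_add_cancel]

theorem dvd_coeffHom_of_homotopy (f : End (Cx R r h)) (H : Homotopy f 0) (n : ℤ) :
    r ∣ coeffHom R r h n f := by
  have := congrArg coeff (H.comm n)
  rw [dNext_eq _ (show (ComplexShape.up ℤ).Rel n (n + 1) from rfl),
    prevD_eq _ (show (ComplexShape.up ℤ).Rel (n - 1) n by simp), coeff_add, coeff_add,
    coeff_comp, coeff_comp, coeff_d rfl, coeff_d (sub_add_cancel n 1), HomologicalComplex.zero_f,
    coeff_zero, add_zero] at this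
  rw [coeffHom_apply]
  exact this ▸ dvd_add (dvd_mul_right _ _) (dvd_mul_left _ _)

theorem homotopy_zero_of_dvd_coeffHom (f : End (Cx R r h)) (hf : ∀ n, r ∣ coeffHom R r h n f) :
    Nonempty (Homotopy f 0) := by
  choose b hb using hf
  let s := alternatingPrimitive b
  let H : ∀ i j, (ComplexShape.up ℤ).Rel j i → ((Cx R r h).X i ⟶ (Cx R r h).X j) :=
    fun i _ _ => ModuleCat.ofHom (s i • LinearMap.id)
  suffices f = Homotopy.nullHomotopicMap' H from this ▸ ⟨Homotopy.nullHomotopy' H⟩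
  refine HomologicalComplex.hom_ext _ _ fun n => hom_ext_coeff ?_
  rw [Homotopy.nullHomotopicMap'_f (show (ComplexShape.up ℤ).Rel (n - 1) n by simp) rfl,
    coeff_add, coeff_comp, coeff_comp, coeff_d rfl, coeff_d (sub_add_cancel n 1), coeff_ofHom,
    coeff_ofHom, ← coeffHom_apply, hb, ← alternatingPrimitive_add_succ b n]
  ring

local notation "K(" R ")" => HomotopyCategory.quotient (ModuleCat R) (ComplexShape.up ℤ)

theorem ker_mapEndRingHom_quotient (hr : ∀ x, r * x = 0 → r ∣ x) :
    RingHom.ker ((K(R)).mapEndRingHom (Cx R r h)) =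
      RingHom.ker ((Ideal.Quotient.mk (Ideal.span {r})).comp (coeffHom R r h 0)) := by
  ext f
  rw [RingHom.mem_ker, RingHom.mem_ker, RingHom.comp_apply, Ideal.Quotient.eq_zero_iff_dvd]
  refine (HomotopyCategory.quotient_map_eq_zero_iff f).trans
    ⟨fun ⟨H⟩ => dvd_coeffHom_of_homotopy f H 0, fun h0 => homotopy_zero_of_dvd_coeffHom f ?_⟩
  intro n
  rwa [← Ideal.Quotient.eq_zero_iff_dvd, mk_coeffHom_eq_mk_coeffHom_zero hr,
    Ideal.Quotient.eq_zero_iff_dvd]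

-- `hr` says that `Cx R r h` is acyclic.
noncomputable def endRingEquiv (hr : ∀ x, r * x = 0 → r ∣ x) :
    End ((K(R)).obj (Cx R r h)) ≃+* R ⧸ Ideal.span {r} :=
  (RingHom.quotientKerEquivOfSurjective ((K(R)).mapEndRingHom_surjective _)).symm.trans <|
    (Ideal.quotEquivOfEq (ker_mapEndRingHom_quotient hr)).trans <|
      RingHom.quotientKerEquivOfSurjective <|
        Ideal.Quotient.mk_surjective.comp fun a => ⟨a • 𝟙 _, coeffHom_smul_id 0 a⟩

end Cx

/-- Let `p` be a prime and `R = ℤ/p²ℤ`. The endomorphism ring, in the homotopy category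
`K(Mod R)`, of the complex `C` which is `R` in every degree with all differentials given by
multiplication by `p`, is isomorphic as a ring to `𝔽_p = ℤ/pℤ`; in particular it is a
one-dimensional `𝔽_p`-vector space. -/
theorem statement8 (p : ℕ) (hp : p.Prime) :
    Nonempty
      (End ((HomotopyCategory.quotient (ModuleCat (ZMod (p ^ 2)))
          (ComplexShape.up ℤ)).obj
        (Cx (ZMod (p ^ 2)) (p : ZMod (p ^ 2)) (p_mul_p p))) ≃+* ZMod p) :=
  ⟨(Cx.endRingEquiv fun _ => ZMod.natCast_dvd_of_natCast_mul_eq_zero hp.ne_zero).trans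
    (ZMod.quotientSpanNatCastEquiv (dvd_pow_self p two_ne_zero))⟩

end Paper8
end
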